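/- Flat band of the modified honeycomb lattice: Let φ ∈ ℝ with cos φ ≠ 0, set λ̂ := 2 cos φ − (1/2) sec φ and E^{(1)} := −cos φ − (1/2) sec φ. Then for every q = (q_1, q_2) ∈ ℝ², the number E^{(1)} is an eigenvalue of the Hermitian 2×2 matrix Ĵ_hc(q, λ̂), i.e. det(Ĵ_hc(q, λ̂) − E^{(1)}·I) = 0. -/
import Mathlib


/-- The Fourier-transformed dressed coupling matrix of the modified
(`J₁–J₂`) honeycomb lattice, with `J₁ = sin φ`, `J₂ = cos φ`. -/
noncomputable def Jhc (φ q1 q2 lam : ℝ) : Matrix (Fin 2) (Fin 2) ℂ :=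
  !![((2 * Real.cos φ * (Real.cos (q1 - q2) + Real.cos q1 + Real.cos q2) + lam : ℝ) : ℂ),
     ((Real.sin φ : ℝ) : ℂ) *
       (Complex.exp (-(Complex.I * (q1 : ℂ))) + Complex.exp (-(Complex.I * (q2 : ℂ))) + 1);
     ((Real.sin φ : ℝ) : ℂ) *
       (Complex.exp (Complex.I * (q1 : ℂ)) + Complex.exp (Complex.I * (q2 : ℂ)) + 1),
     ((-lam : ℝ) : ℂ)]

/-- Flat band of the modified honeycomb lattice: for `cos φ ≠ 0`, with the
ground state gauge `λ̂ = 2 cos φ − (1/2) sec φ`, the number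
`E⁽¹⁾ = −cos φ − (1/2) sec φ` is an eigenvalue of `Ĵ_hc(q, λ̂)` for every
wave vector `q = (q₁, q₂)`. -/
theorem honeycomb_flat_band (φ : ℝ) (hφ : Real.cos φ ≠ 0) :
    ∀ q1 q2 : ℝ,
      (Jhc φ q1 q2 (2 * Real.cos φ - (1/2) * (Real.cos φ)⁻¹)
        - ((-Real.cos φ - (1/2) * (Real.cos φ)⁻¹ : ℝ) : ℂ)
            • (1 : Matrix (Fin 2) (Fin 2) ℂ)).det = 0 := by
  intro q1 q2
  simp [Jhc, Matrix.det_fin_two]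
  have hc : Complex.cos φ ≠ 0 := by
    rw [← Complex.ofReal_cos]; exact_mod_cast hφ
  set a := Complex.exp (Complex.I * q1) with ha
  set f1 := Complex.exp (-(Complex.I * (q1 : ℂ))) with hf1
  set b := Complex.exp (Complex.I * q2) with hb
  set f2 := Complex.exp (-(Complex.I * (q2 : ℂ))) with hf2
  set c := Complex.cos φ with hcdef
  set s := Complex.sin φ with hsdef
  have hsin : s ^ 2 = 1 - c ^ 2 := by
    rw [hsdef, hcdef]; linear_combination Complex.sin_sq_add_cos_sq (φ : ℂ)
  have hck : c * c⁻¹ = 1 := mul_inv_cancel₀ hc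
  have h1 : a * f1 = 1 := by
    rw [ha, hf1, ← Complex.exp_add]; ring_nf; exact Complex.exp_zero
  have h2 : b * f2 = 1 := by
    rw [hb, hf2, ← Complex.exp_add]; ring_nf; exact Complex.exp_zero
  have hc1 : Complex.cos (q1 : ℂ) = (a + f1) / 2 := by
    rw [ha, hf1, Complex.cos]; ring_nf
  have hc2 : Complex.cos (q2 : ℂ) = (b + f2) / 2 := by
    rw [hb, hf2, Complex.cos]; ring_nf
  have hcd : Complex.cos ((q1 : ℂ) - q2) = (a * f2 + f1 * b) / 2 := by
    rw [ha, hf1, hb, hf2, ← Complex.exp_add, ← Complex.exp_add, Complex.cos]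
    ring_nf
  rw [hcd, hc1, hc2]
  linear_combination (a * f2 + f1 * b + a + f1 + b + f2 + 3) * hck +
    (c ^ 2 - 1) * h1 + (c ^ 2 - 1) * h2 -
    ((f1 + f2 + 1) * (a + b + 1)) * hsin
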